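/- Let X ∈ VPM°(n) and let V be a nonzero n×n real symmetric matrix. Set A = X^{−1/2} V X^{−1/2} and B = (I−X)^{−1/2} V (I−X)^{−1/2}, and define the exit times t⁺ = sup{t > 0 : X + tV ∈ VPM°(n)} and t⁻ = sup{t > 0 : X − tV ∈ VPM°(n)}. Then t⁺ and t⁻ are finite and strictly positive, and 1/t⁺ + 1/t⁻ = max( max(0, −λmin(A)), max(0, λmax(B)) ) + max( max(0, λmax(A)), max(0, −λmin(B)) ); the right-hand side is the Hilbert–Finsler norm ‖V‖^H_X. -/

import Mathlib

open Matrix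

/-- The open variance-precision bicone VPM°(n): symmetric matrices `X` with
`X` and `I - X` positive definite. -/
def VPM (n : ℕ) : Set (Matrix (Fin n) (Fin n) ℝ) :=
  {X | X.PosDef ∧ (1 - X).PosDef}

/-- The positive semidefinite square root of a positive semidefinite matrix
(the Mathlib definition of December 2024, since removed from Mathlib). -/
noncomputable def Matrix.PosSemidef.sqrt {n : Type*} [Fintype n] [DecidableEq n] {𝕜 : Type*}
    [RCLike 𝕜] [PartialOrder 𝕜] {A : Matrix n n 𝕜} (hA : A.PosSemidef) : Matrix n n 𝕜 :=
  hA.1.eigenvectorUnitary.1 * diagonal ((↑) ∘ (√·) ∘ hA.1.eigenvalues) *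
  (star hA.1.eigenvectorUnitary : Matrix n n 𝕜)

/-- Largest (real) eigenvalue of a matrix, as the supremum of its real spectrum. -/
noncomputable def lmax {n : ℕ} (S : Matrix (Fin n) (Fin n) ℝ) : ℝ := sSup (spectrum ℝ S)

/-- Smallest (real) eigenvalue of a matrix, as the infimum of its real spectrum. -/
noncomputable def lmin {n : ℕ} (S : Matrix (Fin n) (Fin n) ℝ) : ℝ := sInf (spectrum ℝ S)

section Aux

variable {n : ℕ}

lemma Matrix.PosSemidef.sqrt_mul_self {A : Matrix (Fin n) (Fin n) ℝ} (hA : A.PosSemidef) :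
    hA.sqrt * hA.sqrt = A := by
  have hU : star (hA.1.eigenvectorUnitary : Matrix (Fin n) (Fin n) ℝ) *
      (hA.1.eigenvectorUnitary : Matrix (Fin n) (Fin n) ℝ) = 1 :=
    Unitary.star_mul_self_of_mem hA.1.eigenvectorUnitary.2
  have hd : (diagonal ((↑) ∘ (√·) ∘ hA.1.eigenvalues) : Matrix (Fin n) (Fin n) ℝ) *
      diagonal ((↑) ∘ (√·) ∘ hA.1.eigenvalues) = diagonal (RCLike.ofReal ∘ hA.1.eigenvalues) := by
    rw [diagonal_mul_diagonal]
    congr 1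
    funext i
    simp [Real.mul_self_sqrt (hA.eigenvalues_nonneg i)]
  have hs := hA.1.spectral_theorem
  rw [Unitary.conjStarAlgAut_apply] at hs
  unfold Matrix.PosSemidef.sqrt
  calc _ = (hA.1.eigenvectorUnitary : Matrix (Fin n) (Fin n) ℝ) *
        ((diagonal ((↑) ∘ (√·) ∘ hA.1.eigenvalues) : Matrix (Fin n) (Fin n) ℝ) *
        (star (hA.1.eigenvectorUnitary : Matrix (Fin n) (Fin n) ℝ) *
        (hA.1.eigenvectorUnitary : Matrix (Fin n) (Fin n) ℝ)) *
        diagonal ((↑) ∘ (√·) ∘ hA.1.eigenvalues)) *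
        star (hA.1.eigenvectorUnitary : Matrix (Fin n) (Fin n) ℝ) := by
          simp only [Matrix.mul_assoc]; rfl
    _ = A := by rw [hU, Matrix.mul_one, hd]; exact hs.symm

lemma Matrix.PosSemidef.posSemidef_sqrt {A : Matrix (Fin n) (Fin n) ℝ} (hA : A.PosSemidef) :
    hA.sqrt.PosSemidef := by
  unfold Matrix.PosSemidef.sqrt
  rw [Matrix.star_eq_conjTranspose]
  exact (Matrix.PosSemidef.diagonal (fun i => Real.sqrt_nonneg _)).mul_mul_conjTranspose_same _

lemma posDef_conjTranspose_mul_mul' {M B : Matrix (Fin n) (Fin n) ℝ}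
    (hM : M.PosDef) (hB : IsUnit B.det) : (Bᴴ * M * B).PosDef := by
  have hinj : Function.Injective B.mulVec :=
    Matrix.mulVec_injective_iff_isUnit.mpr ((Matrix.isUnit_iff_isUnit_det B).mpr hB)
  exact hM.conjTranspose_mul_mul_same hinj

lemma posDef_mul_mul_conjTranspose' {M B : Matrix (Fin n) (Fin n) ℝ}
    (hM : M.PosDef) (hB : IsUnit B.det) : (B * M * Bᴴ).PosDef := by
  have hB' : IsUnit (Bᴴ).det := by
    rwa [Matrix.det_conjTranspose, star_trivial]
  simpa only [conjTranspose_conjTranspose] using posDef_conjTranspose_mul_mul' hM hB'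

lemma posDef_conj_iff' {M B : Matrix (Fin n) (Fin n) ℝ} (hB : IsUnit B.det) :
    (B * M * Bᴴ).PosDef ↔ M.PosDef := by
  constructor
  · intro h
    have hBi : IsUnit (B⁻¹).det := by
      rw [Matrix.det_nonsing_inv]
      exact hB.ringInverse
    have hmain := posDef_mul_mul_conjTranspose' h hBi
    have hMe : B⁻¹ * (B * M * Bᴴ) * (B⁻¹)ᴴ = M := by
      rw [Matrix.conjTranspose_nonsing_inv]
      calc B⁻¹ * (B * M * Bᴴ) * (Bᴴ)⁻¹
          = (B⁻¹ * B) * M * (Bᴴ * (Bᴴ)⁻¹) := by simp only [Matrix.mul_assoc]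
        _ = M := by
            rw [Matrix.nonsing_inv_mul _ hB,
              Matrix.mul_nonsing_inv _ (by rwa [Matrix.det_conjTranspose, star_trivial]),
              Matrix.one_mul, Matrix.mul_one]
    rwa [hMe] at hmain
  · intro h; exact posDef_mul_mul_conjTranspose' h hB

lemma unitary_det_isUnit' (A : Matrix (Fin n) (Fin n) ℝ) (hA : A.IsHermitian) :
    IsUnit ((hA.eigenvectorUnitary : Matrix (Fin n) (Fin n) ℝ)).det := by
  have h := Matrix.mem_unitaryGroup_iff.mp (hA.eigenvectorUnitary).2
  have h2 := congrArg Matrix.det h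
  rw [Matrix.det_mul, Matrix.det_one] at h2
  exact IsUnit.of_mul_eq_one _ h2

lemma spectral_conj' (A : Matrix (Fin n) (Fin n) ℝ) (hA : A.IsHermitian) (t : ℝ) :
    1 + t • A = (hA.eigenvectorUnitary : Matrix (Fin n) (Fin n) ℝ) *
      diagonal (fun i => 1 + t * hA.eigenvalues i) *
      (hA.eigenvectorUnitary : Matrix (Fin n) (Fin n) ℝ)ᴴ := by
  have hU : (hA.eigenvectorUnitary : Matrix (Fin n) (Fin n) ℝ) *
      (hA.eigenvectorUnitary : Matrix (Fin n) (Fin n) ℝ)ᴴ = 1 := by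
    rw [← Matrix.star_eq_conjTranspose]
    exact Matrix.mem_unitaryGroup_iff.mp (hA.eigenvectorUnitary).2
  have hdiag : (diagonal (fun i => 1 + t * hA.eigenvalues i) : Matrix (Fin n) (Fin n) ℝ)
      = 1 + t • diagonal (RCLike.ofReal ∘ hA.eigenvalues) := by
    rw [← Matrix.diagonal_one, ← Matrix.diagonal_smul, Matrix.diagonal_add]
    congr 1
  rw [hdiag]
  rw [Matrix.mul_add, Matrix.add_mul, Matrix.mul_one, hU, Matrix.mul_smul, Matrix.smul_mul]
  congr 1
  have hs := hA.spectral_theorem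
  rw [Unitary.conjStarAlgAut_apply] at hs
  rw [← Matrix.star_eq_conjTranspose, ← hs]

lemma posDef_one_add_smul_iff' (A : Matrix (Fin n) (Fin n) ℝ) (hA : A.IsHermitian) (t : ℝ) :
    (1 + t • A).PosDef ↔ ∀ i, 0 < 1 + t * hA.eigenvalues i := by
  rw [spectral_conj' A hA t, posDef_conj_iff' (unitary_det_isUnit' A hA),
    Matrix.posDef_diagonal_iff]

lemma lmin_le' [Nonempty (Fin n)] {A : Matrix (Fin n) (Fin n) ℝ} (hA : A.IsHermitian)
    (i : Fin n) : lmin A ≤ hA.eigenvalues i := by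
  rw [lmin, hA.spectrum_real_eq_range_eigenvalues]
  exact csInf_le (Set.finite_range _).bddBelow ⟨i, rfl⟩

lemma le_lmax' [Nonempty (Fin n)] {A : Matrix (Fin n) (Fin n) ℝ} (hA : A.IsHermitian)
    (i : Fin n) : hA.eigenvalues i ≤ lmax A := by
  rw [lmax, hA.spectrum_real_eq_range_eigenvalues]
  exact le_csSup (Set.finite_range _).bddAbove ⟨i, rfl⟩

lemma exists_lmin' [Nonempty (Fin n)] {A : Matrix (Fin n) (Fin n) ℝ} (hA : A.IsHermitian) :
    ∃ i, lmin A = hA.eigenvalues i := by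
  rw [lmin, hA.spectrum_real_eq_range_eigenvalues]
  obtain ⟨i, hi⟩ := (Set.range_nonempty hA.eigenvalues).csInf_mem (Set.finite_range _)
  exact ⟨i, hi.symm⟩

lemma exists_lmax' [Nonempty (Fin n)] {A : Matrix (Fin n) (Fin n) ℝ} (hA : A.IsHermitian) :
    ∃ i, lmax A = hA.eigenvalues i := by
  rw [lmax, hA.spectrum_real_eq_range_eigenvalues]
  obtain ⟨i, hi⟩ := (Set.range_nonempty hA.eigenvalues).csSup_mem (Set.finite_range _)
  exact ⟨i, hi.symm⟩

lemma forall_iff_lmin' [Nonempty (Fin n)] {A : Matrix (Fin n) (Fin n) ℝ} (hA : A.IsHermitian)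
    {t : ℝ} (ht : 0 < t) :
    (∀ i, 0 < 1 + t * hA.eigenvalues i) ↔ t * (-(lmin A)) < 1 := by
  constructor
  · intro h
    obtain ⟨i, hi⟩ := exists_lmin' hA
    have := h i
    rw [hi]
    nlinarith
  · intro h i
    have h2 : t * lmin A ≤ t * hA.eigenvalues i :=
      mul_le_mul_of_nonneg_left (lmin_le' hA i) ht.le
    nlinarith

lemma forall_iff_lmax' [Nonempty (Fin n)] {A : Matrix (Fin n) (Fin n) ℝ} (hA : A.IsHermitian)
    {t : ℝ} (ht : 0 < t) :
    (∀ i, 0 < 1 + (-t) * hA.eigenvalues i) ↔ t * lmax A < 1 := by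
  constructor
  · intro h
    obtain ⟨i, hi⟩ := exists_lmax' hA
    have := h i
    rw [hi]
    nlinarith
  · intro h i
    have h2 : t * hA.eigenvalues i ≤ t * lmax A :=
      mul_le_mul_of_nonneg_left (le_lmax' hA i) ht.le
    nlinarith

lemma sqrt_det_isUnit' {W : Matrix (Fin n) (Fin n) ℝ} (hW : W.PosDef) :
    IsUnit (hW.posSemidef.sqrt).det := by
  have h := congrArg Matrix.det hW.posSemidef.sqrt_mul_self
  rw [Matrix.det_mul] at h
  have hd : (hW.posSemidef.sqrt).det ≠ 0 := by
    intro h0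
    rw [h0, mul_zero] at h
    exact hW.det_pos.ne' h.symm
  exact hd.isUnit

lemma conj_inv_conj' {s : Matrix (Fin n) (Fin n) ℝ} (hdet : IsUnit s.det)
    (V : Matrix (Fin n) (Fin n) ℝ) : s * (s⁻¹ * V * s⁻¹) * s = V := by
  calc s * (s⁻¹ * V * s⁻¹) * s = (s * s⁻¹) * V * (s⁻¹ * s) := by simp only [Matrix.mul_assoc]
    _ = V := by
        rw [Matrix.mul_nonsing_inv _ hdet, Matrix.nonsing_inv_mul _ hdet,
          Matrix.one_mul, Matrix.mul_one]

lemma conj_decomp' {W : Matrix (Fin n) (Fin n) ℝ} (hW : W.PosDef)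
    (V : Matrix (Fin n) (Fin n) ℝ) (t : ℝ) :
    W + t • V = hW.posSemidef.sqrt *
      (1 + t • (hW.posSemidef.sqrt⁻¹ * V * hW.posSemidef.sqrt⁻¹)) * hW.posSemidef.sqrt := by
  set s := hW.posSemidef.sqrt with hs
  have hdet : IsUnit s.det := sqrt_det_isUnit' hW
  rw [Matrix.mul_add, Matrix.add_mul, Matrix.mul_one, Matrix.mul_smul, Matrix.smul_mul,
    hW.posSemidef.sqrt_mul_self, conj_inv_conj' hdet V]

lemma posDef_herm_conj_iff' {M s : Matrix (Fin n) (Fin n) ℝ} (hs : s.IsHermitian)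
    (hdet : IsUnit s.det) : (s * M * s).PosDef ↔ M.PosDef := by
  have h := posDef_conj_iff' (M := M) (B := s) hdet
  rwa [hs.eq] at h

lemma eq_zero_of_eigenvalues_zero' {B : Matrix (Fin n) (Fin n) ℝ} (hB : B.IsHermitian)
    (h : ∀ i, hB.eigenvalues i = 0) : B = 0 := by
  have hd : (diagonal (RCLike.ofReal ∘ hB.eigenvalues) : Matrix (Fin n) (Fin n) ℝ) = 0 := by
    rw [show (RCLike.ofReal ∘ hB.eigenvalues : Fin n → ℝ) = fun _ => 0 from
      funext fun i => by simp [h i], Matrix.diagonal_zero]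
  rw [hB.spectral_theorem, Unitary.conjStarAlgAut_apply, hd, Matrix.mul_zero, Matrix.zero_mul]

lemma eq_zero_of_posSemidef_neg' {B : Matrix (Fin n) (Fin n) ℝ} (hB : B.PosSemidef)
    (hB' : (-B).PosSemidef) : B = 0 := by
  apply eq_zero_of_eigenvalues_zero' hB.1
  intro i
  refine le_antisymm ?_ (hB.eigenvalues_nonneg i)
  have h1 := hB'.re_dotProduct_nonneg
    ((hB.1.eigenvectorBasis i).ofLp)
  have h2 := hB.1.eigenvalues_eq i
  simp only [Matrix.neg_mulVec, dotProduct_neg, map_neg] at h1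
  rw [h2]
  linarith [h1]

lemma posSemidef_of_lmin_nonneg' [Nonempty (Fin n)] {A : Matrix (Fin n) (Fin n) ℝ}
    (hA : A.IsHermitian) (h : 0 ≤ lmin A) : A.PosSemidef :=
  hA.posSemidef_iff_eigenvalues_nonneg.mpr fun i => h.trans (lmin_le' hA i)

lemma neg_posSemidef_of_lmax_nonpos' [Nonempty (Fin n)] {A : Matrix (Fin n) (Fin n) ℝ}
    (hA : A.IsHermitian) (h : lmax A ≤ 0) : (-A).PosSemidef := by
  have key : -A = (hA.eigenvectorUnitary : Matrix (Fin n) (Fin n) ℝ) *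
      diagonal (fun i => -(hA.eigenvalues i)) *
      ((hA.eigenvectorUnitary : Matrix (Fin n) (Fin n) ℝ))ᴴ := by
    have hd : (diagonal (fun i => -(hA.eigenvalues i)) : Matrix (Fin n) (Fin n) ℝ)
        = -diagonal (RCLike.ofReal ∘ hA.eigenvalues) := by
      rw [← Matrix.diagonal_neg]
      congr 1
    have hs := hA.spectral_theorem
    rw [Unitary.conjStarAlgAut_apply] at hs
    rw [hd, Matrix.mul_neg, Matrix.neg_mul, ← Matrix.star_eq_conjTranspose,
      ← hs]
  rw [key]
  exact (Matrix.posSemidef_diagonal_iff.mpr fun i =>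
    neg_nonneg.mpr ((le_lmax' hA i).trans h)).mul_mul_conjTranspose_same _

end Aux

/-- The exit times of the line `s ↦ X + sV` from VPM°(n) are finite and positive, and
the sum of their reciprocals is the Hilbert–Finsler norm `‖V‖^H_X`. -/
theorem exit_times_eq_finsler_norm {n : ℕ} (X V : Matrix (Fin n) (Fin n) ℝ)
    (hX : X ∈ VPM n) (hV : V.IsHermitian) (hV0 : V ≠ 0)
    (A B : Matrix (Fin n) (Fin n) ℝ)
    (hA : A = hX.1.posSemidef.sqrt⁻¹ * V * hX.1.posSemidef.sqrt⁻¹)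
    (hB : B = hX.2.posSemidef.sqrt⁻¹ * V * hX.2.posSemidef.sqrt⁻¹)
    (tp tm : ℝ)
    (htp : tp = sSup {t : ℝ | 0 < t ∧ X + t • V ∈ VPM n})
    (htm : tm = sSup {t : ℝ | 0 < t ∧ X - t • V ∈ VPM n}) :
    BddAbove {t : ℝ | 0 < t ∧ X + t • V ∈ VPM n} ∧
    BddAbove {t : ℝ | 0 < t ∧ X - t • V ∈ VPM n} ∧
    0 < tp ∧ 0 < tm ∧
    1 / tp + 1 / tm
      = max (max 0 (-lmin A)) (max 0 (lmax B))
        + max (max 0 (lmax A)) (max 0 (-lmin B)) := by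
  have hne : Nonempty (Fin n) := by
    rcases Nat.eq_zero_or_pos n with h0 | hpos
    · subst h0
      exact absurd (show V = 0 by ext i j; exact i.elim0) hV0
    · exact ⟨⟨0, hpos⟩⟩
  have hsd : IsUnit (hX.1.posSemidef.sqrt).det := sqrt_det_isUnit' hX.1
  have hrd : IsUnit (hX.2.posSemidef.sqrt).det := sqrt_det_isUnit' hX.2
  have hs_herm : (hX.1.posSemidef.sqrt).IsHermitian := hX.1.posSemidef.posSemidef_sqrt.1
  have hr_herm : (hX.2.posSemidef.sqrt).IsHermitian := hX.2.posSemidef.posSemidef_sqrt.1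
  have hsinv : ((hX.1.posSemidef.sqrt)⁻¹).IsHermitian := hs_herm.inv
  have hrinv : ((hX.2.posSemidef.sqrt)⁻¹).IsHermitian := hr_herm.inv
  have hA' : A.IsHermitian := by
    rw [hA]
    have h := Matrix.isHermitian_conjTranspose_mul_mul (hX.1.posSemidef.sqrt)⁻¹ hV
    rwa [hsinv.eq] at h
  have hB' : B.IsHermitian := by
    rw [hB]
    have h := Matrix.isHermitian_conjTranspose_mul_mul (hX.2.posSemidef.sqrt)⁻¹ hV
    rwa [hrinv.eq] at h
  have hVA : hX.1.posSemidef.sqrt * A * hX.1.posSemidef.sqrt = V := by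
    rw [hA]; exact conj_inv_conj' hsd V
  have hVB : hX.2.posSemidef.sqrt * B * hX.2.posSemidef.sqrt = V := by
    rw [hB]; exact conj_inv_conj' hrd V
  -- characterization of membership for positive t
  have hplus : ∀ t : ℝ, 0 < t →
      (X + t • V ∈ VPM n ↔ (t * (-(lmin A)) < 1 ∧ t * lmax B < 1)) := by
    intro t ht
    have c1 : (X + t • V).PosDef ↔ t * (-(lmin A)) < 1 := by
      rw [conj_decomp' hX.1 V t, ← hA, posDef_herm_conj_iff' hs_herm hsd,
        posDef_one_add_smul_iff' A hA' t, forall_iff_lmin' hA' ht]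
    have c2 : ((1 : Matrix (Fin n) (Fin n) ℝ) - (X + t • V)).PosDef ↔ t * lmax B < 1 := by
      have e : (1 : Matrix (Fin n) (Fin n) ℝ) - (X + t • V) = (1 - X) + (-t) • V := by
        module
      rw [e, conj_decomp' hX.2 V (-t), ← hB, posDef_herm_conj_iff' hr_herm hrd,
        posDef_one_add_smul_iff' B hB' (-t), forall_iff_lmax' hB' ht]
    simp only [VPM, Set.mem_setOf_eq]
    rw [c1, c2]
  have hminus : ∀ t : ℝ, 0 < t →
      (X - t • V ∈ VPM n ↔ (t * lmax A < 1 ∧ t * (-(lmin B)) < 1)) := by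
    intro t ht
    have c1 : (X - t • V).PosDef ↔ t * lmax A < 1 := by
      have e : X - t • V = X + (-t) • V := by module
      rw [e, conj_decomp' hX.1 V (-t), ← hA, posDef_herm_conj_iff' hs_herm hsd,
        posDef_one_add_smul_iff' A hA' (-t), forall_iff_lmax' hA' ht]
    have c2 : ((1 : Matrix (Fin n) (Fin n) ℝ) - (X - t • V)).PosDef ↔ t * (-(lmin B)) < 1 := by
      have e : (1 : Matrix (Fin n) (Fin n) ℝ) - (X - t • V) = (1 - X) + t • V := by
        module
      rw [e, conj_decomp' hX.2 V t, ← hB, posDef_herm_conj_iff' hr_herm hrd,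
        posDef_one_add_smul_iff' B hB' t, forall_iff_lmin' hB' ht]
    simp only [VPM, Set.mem_setOf_eq]
    rw [c1, c2]
  set mp := max (max 0 (-lmin A)) (max 0 (lmax B)) with hmp_def
  set mm := max (max 0 (lmax A)) (max 0 (-lmin B)) with hmm_def
  have hmp : 0 < mp := by
    by_contra hle
    push_neg at hle
    have ha1 : -(lmin A) ≤ 0 :=
      le_trans (le_max_right 0 _) (le_trans (le_max_left _ _) hle)
    have hb1 : lmax B ≤ 0 :=
      le_trans (le_max_right 0 _) (le_trans (le_max_right _ _) hle)
    have hAps : A.PosSemidef := posSemidef_of_lmin_nonneg' hA' (by linarith)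
    have hVps : V.PosSemidef := by
      rw [← hVA]
      have h := hAps.mul_mul_conjTranspose_same hX.1.posSemidef.sqrt
      rwa [hs_herm.eq] at h
    have hBps : B.PosSemidef := by
      rw [hB]
      have h := hVps.conjTranspose_mul_mul_same (hX.2.posSemidef.sqrt)⁻¹
      rwa [hrinv.eq] at h
    have hBneg : (-B).PosSemidef := neg_posSemidef_of_lmax_nonpos' hB' hb1
    have hB0 : B = 0 := eq_zero_of_posSemidef_neg' hBps hBneg
    exact hV0 (by rw [← hVB, hB0, Matrix.mul_zero, Matrix.zero_mul])
  have hmm : 0 < mm := by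
    by_contra hle
    push_neg at hle
    have ha2 : lmax A ≤ 0 :=
      le_trans (le_max_right 0 _) (le_trans (le_max_left _ _) hle)
    have hb2 : -(lmin B) ≤ 0 :=
      le_trans (le_max_right 0 _) (le_trans (le_max_right _ _) hle)
    have hAneg : (-A).PosSemidef := neg_posSemidef_of_lmax_nonpos' hA' ha2
    have hVneg : (-V).PosSemidef := by
      have h := hAneg.mul_mul_conjTranspose_same hX.1.posSemidef.sqrt
      rw [hs_herm.eq] at h
      rwa [Matrix.mul_neg, Matrix.neg_mul, hVA] at h
    have hBneg : (-B).PosSemidef := by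
      have h := hVneg.conjTranspose_mul_mul_same (hX.2.posSemidef.sqrt)⁻¹
      rw [hrinv.eq] at h
      rwa [Matrix.mul_neg, Matrix.neg_mul, ← hB] at h
    have hBps : B.PosSemidef := posSemidef_of_lmin_nonneg' hB' (by linarith)
    have hB0 : B = 0 := eq_zero_of_posSemidef_neg' hBps hBneg
    exact hV0 (by rw [← hVB, hB0, Matrix.mul_zero, Matrix.zero_mul])
  have hSp : {t : ℝ | 0 < t ∧ X + t • V ∈ VPM n} = Set.Ioo 0 (1 / mp) := by
    ext t
    simp only [Set.mem_setOf_eq, Set.mem_Ioo]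
    constructor
    · rintro ⟨ht, hmem⟩
      obtain ⟨h1, h2⟩ := (hplus t ht).mp hmem
      refine ⟨ht, ?_⟩
      rw [lt_div_iff₀ hmp]
      rw [hmp_def, mul_max_of_nonneg _ _ ht.le, mul_max_of_nonneg _ _ ht.le,
        mul_max_of_nonneg _ _ ht.le]
      exact max_lt (max_lt (by simpa using zero_lt_one) h1)
        (max_lt (by simpa using zero_lt_one) h2)
    · rintro ⟨ht, hlt⟩
      have h1t : t * mp < 1 := (lt_div_iff₀ hmp).mp hlt
      refine ⟨ht, (hplus t ht).mpr ⟨?_, ?_⟩⟩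
      · have hle : -(lmin A) ≤ mp := (le_max_right 0 _).trans (le_max_left _ _)
        nlinarith
      · have hle : lmax B ≤ mp := (le_max_right 0 _).trans (le_max_right _ _)
        nlinarith
  have hSm : {t : ℝ | 0 < t ∧ X - t • V ∈ VPM n} = Set.Ioo 0 (1 / mm) := by
    ext t
    simp only [Set.mem_setOf_eq, Set.mem_Ioo]
    constructor
    · rintro ⟨ht, hmem⟩
      obtain ⟨h1, h2⟩ := (hminus t ht).mp hmem
      refine ⟨ht, ?_⟩
      rw [lt_div_iff₀ hmm]
      rw [hmm_def, mul_max_of_nonneg _ _ ht.le, mul_max_of_nonneg _ _ ht.le,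
        mul_max_of_nonneg _ _ ht.le]
      exact max_lt (max_lt (by simpa using zero_lt_one) h1)
        (max_lt (by simpa using zero_lt_one) h2)
    · rintro ⟨ht, hlt⟩
      have h1t : t * mm < 1 := (lt_div_iff₀ hmm).mp hlt
      refine ⟨ht, (hminus t ht).mpr ⟨?_, ?_⟩⟩
      · have hle : lmax A ≤ mm := (le_max_right 0 _).trans (le_max_left _ _)
        nlinarith
      · have hle : -(lmin B) ≤ mm := (le_max_right 0 _).trans (le_max_right _ _)
        nlinarith
  have htp' : tp = 1 / mp := by
    rw [htp, hSp, csSup_Ioo (by positivity)]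
  have htm' : tm = 1 / mm := by
    rw [htm, hSm, csSup_Ioo (by positivity)]
  refine ⟨hSp ▸ bddAbove_Ioo, hSm ▸ bddAbove_Ioo, by rw [htp']; positivity,
    by rw [htm']; positivity, ?_⟩
  rw [htp', htm', one_div_one_div, one_div_one_div]
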